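/- The boundary-edge probability P_{b₁} of the heavy hexagon X-graph equals the probability of an odd total number of successes in the union of d independent Bernoulli(2p/3) trials and 3d−2 independent Bernoulli(8p/15) trials; consequently P_{b₁} = 1/2 − (1/2)(1 − 4p/3)^d (1 − 16p/15)^{3d−2}. -/
import Mathlib

open Finset

lemma parity_sums (q : ℝ) (n : ℕ) :
    (∑ k ∈ (range (n + 1)).filter (fun k => Odd k),
        (n.choose k : ℝ) * q ^ k * (1 - q) ^ (n - k)) = (1 - (1 - 2 * q) ^ n) / 2 ∧
    (∑ k ∈ (range (n + 1)).filter (fun k => Even k),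
        (n.choose k : ℝ) * q ^ k * (1 - q) ^ (n - k)) = (1 + (1 - 2 * q) ^ n) / 2 := by
  have h1 : ∑ k ∈ range (n + 1), (n.choose k : ℝ) * q ^ k * (1 - q) ^ (n - k) = 1 := by
    have h := add_pow q (1 - q) n
    rw [show q + (1 - q) = 1 by ring, one_pow] at h
    calc ∑ k ∈ range (n + 1), (n.choose k : ℝ) * q ^ k * (1 - q) ^ (n - k)
        = ∑ k ∈ range (n + 1), q ^ k * (1 - q) ^ (n - k) * (n.choose k : ℝ) :=
          Finset.sum_congr rfl (fun k _ => by ring)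
      _ = 1 := h.symm
  have h2 : ∑ k ∈ range (n + 1), (-1 : ℝ) ^ k * ((n.choose k : ℝ) * q ^ k * (1 - q) ^ (n - k))
      = (1 - 2 * q) ^ n := by
    have h := add_pow (-q) (1 - q) n
    rw [show -q + (1 - q) = 1 - 2 * q by ring] at h
    calc ∑ k ∈ range (n + 1), (-1 : ℝ) ^ k * ((n.choose k : ℝ) * q ^ k * (1 - q) ^ (n - k))
        = ∑ k ∈ range (n + 1), (-q) ^ k * (1 - q) ^ (n - k) * (n.choose k : ℝ) :=
          Finset.sum_congr rfl (fun k _ => by rw [neg_pow]; ring)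
      _ = (1 - 2 * q) ^ n := h.symm
  have hsplit : ∀ g : ℕ → ℝ, ∑ k ∈ range (n + 1), g k =
      (∑ k ∈ (range (n + 1)).filter (fun k => Even k), g k) +
      (∑ k ∈ (range (n + 1)).filter (fun k => Odd k), g k) := by
    intro g
    rw [← Finset.sum_filter_add_sum_filter_not (range (n + 1)) (fun k => Even k) g]
    congr 1
    refine Finset.sum_congr (Finset.filter_congr fun k _ => ?_) (fun _ _ => rfl)
    simp [Nat.not_even_iff_odd]
  rw [hsplit] at h1 h2
  have he : ∑ k ∈ (range (n + 1)).filter (fun k => Even k),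
      (-1 : ℝ) ^ k * ((n.choose k : ℝ) * q ^ k * (1 - q) ^ (n - k)) =
      ∑ k ∈ (range (n + 1)).filter (fun k => Even k),
      (n.choose k : ℝ) * q ^ k * (1 - q) ^ (n - k) :=
    Finset.sum_congr rfl (fun k hk => by
      rw [((Finset.mem_filter.mp hk).2 : Even k).neg_one_pow, one_mul])
  have ho : ∑ k ∈ (range (n + 1)).filter (fun k => Odd k),
      (-1 : ℝ) ^ k * ((n.choose k : ℝ) * q ^ k * (1 - q) ^ (n - k)) =
      -∑ k ∈ (range (n + 1)).filter (fun k => Odd k),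
      (n.choose k : ℝ) * q ^ k * (1 - q) ^ (n - k) := by
    rw [← Finset.sum_neg_distrib]
    exact Finset.sum_congr rfl (fun k hk => by
      rw [((Finset.mem_filter.mp hk).2 : Odd k).neg_one_pow]; ring)
  rw [he, ho] at h2
  constructor <;> linarith

/-- The boundary-edge probability `P_{b₁}` of the heavy hexagon `X`-graph equals the
probability of an odd total number of successes among `d` independent Bernoulli(`2p/3`)
trials together with `3d - 2` independent Bernoulli(`8p/15`) trials, the total parity being
odd iff exactly one of the two independent families has odd parity; consequently
`P_{b₁} = 1/2 - (1/2)(1 - 4p/3)^d (1 - 16p/15)^{3d-2}`. -/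
theorem boundary_edge_probability_closed_form (p : ℝ) (hp : p ∈ Set.Icc (0 : ℝ) 1)
    (d : ℕ) (hd : 1 ≤ d) :
    (∑ n ∈ (range (d + 1)).filter (fun n => Odd n),
        (d.choose n : ℝ) * (2 * p / 3) ^ n * (1 - 2 * p / 3) ^ (d - n)) *
      (∑ m ∈ (range (3 * d - 2 + 1)).filter (fun m => Even m),
        ((3 * d - 2).choose m : ℝ) * (8 * p / 15) ^ m * (1 - 8 * p / 15) ^ (3 * d - 2 - m)) +
    (∑ n ∈ (range (d + 1)).filter (fun n => Even n),
        (d.choose n : ℝ) * (2 * p / 3) ^ n * (1 - 2 * p / 3) ^ (d - n)) *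
      (∑ m ∈ (range (3 * d - 2 + 1)).filter (fun m => Odd m),
        ((3 * d - 2).choose m : ℝ) * (8 * p / 15) ^ m * (1 - 8 * p / 15) ^ (3 * d - 2 - m))
    = 1 / 2 - (1 / 2) * (1 - 4 * p / 3) ^ d * (1 - 16 * p / 15) ^ (3 * d - 2) := by
  obtain ⟨hO1, hE1⟩ := parity_sums (2 * p / 3) d
  obtain ⟨hO2, hE2⟩ := parity_sums (8 * p / 15) (3 * d - 2)
  rw [hO1, hE1, hO2, hE2,
    show 1 - 2 * (2 * p / 3) = 1 - 4 * p / 3 by ring,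
    show 1 - 2 * (8 * p / 15) = 1 - 16 * p / 15 by ring]
  ring
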